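/- Let N ≥ 2 and 0 ≤ k ≤ N. Then the Dicke vector |k, N−k⟩ is an eigenvector of S_{2,N}(σ₁⊗σ₁ + σ₂⊗σ₂): S_{2,N}(σ₁⊗σ₁ + σ₂⊗σ₂)|k, N−k⟩ = (4k(N−k)/(N(N−1))) · |k, N−k⟩. -/

import Mathlib

open scoped ComplexConjugate
open MeasureTheory Filter Topology

noncomputable section

/-! ## Setting

`M₂(ℂ)^{⊗N}` is realized as matrices indexed by `Fin N → Fin 2`, acting on
`(ℂ²)^{⊗N} = EuclideanSpace ℂ (Fin N → Fin 2)`. -/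

/-- `M₂(ℂ)^{⊗N}`, realized as matrices indexed by `Fin N → Fin 2`. -/
abbrev TP (N : ℕ) : Type := Matrix (Fin N → Fin 2) (Fin N → Fin 2) ℂ

/-- The Pauli matrices `σ₁, σ₂, σ₃`. -/
def pauli : Fin 3 → Matrix (Fin 2) (Fin 2) ℂ
  | 0 => !![0, 1; 1, 0]
  | 1 => !![0, -Complex.I; Complex.I, 0]
  | 2 => !![1, 0; 0, -1]

/-- The symmetrization operator `S_N` on `M₂(ℂ)^{⊗N}`: the average over all permutations
of the tensor factors. -/
def symmMat (N : ℕ) (A : TP N) : TP N :=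
  (N.factorial : ℂ)⁻¹ • ∑ σ : Equiv.Perm (Fin N), Matrix.of fun i j => A (i ∘ σ) (j ∘ σ)

/-- `b ⊗ I₂^{⊗(N−M)}` (junk value `0` if `M > N`). -/
def embedMat (M N : ℕ) (b : TP M) : TP N :=
  if h : M ≤ N then
    Matrix.of fun i j =>
      b (fun k => i (Fin.castLE h k)) (fun k => j (Fin.castLE h k)) *
        ∏ k ∈ Finset.univ.filter (fun k : Fin N => M ≤ (k : ℕ)),
          (if i k = j k then (1 : ℂ) else 0)
  else 0

/-- `S_{M,N}(b) = S_N(b ⊗ I₂^{⊗(N−M)})`. -/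
def SMN (M N : ℕ) (b : TP M) : TP N := symmMat N (embedMat M N b)

/-- The elementary tensor `σ_{m 0} ⊗ ⋯ ⊗ σ_{m (L-1)}` as a matrix on `(ℂ²)^{⊗L}`. -/
def pauliTensor {L : ℕ} (m : Fin L → Fin 3) : TP L :=
  Matrix.of fun i j => ∏ k, pauli (m k) (i k) (j k)

/-- For a monomial with exponents `d`, the list of its variable indices (first `d 0` copies
of `0`, then `d 1` copies of `1`, then `d 2` copies of `2`). -/
def monFun (d : Fin 3 →₀ ℕ) : Fin (d 0 + d 1 + d 2) → Fin 3 := fun k =>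
  if (k : ℕ) < d 0 then 0 else if (k : ℕ) < d 0 + d 1 then 1 else 2

/-- Quantization of the monomial `x^{d 0} y^{d 1} z^{d 2}`:
`S_{L,N}(σ_{j₁} ⊗ ⋯ ⊗ σ_{j_L})` if `L ≤ N`, and `0` if `L > N`. -/
def Qmon (N : ℕ) (d : Fin 3 →₀ ℕ) : TP N :=
  SMN (d 0 + d 1 + d 2) N (pauliTensor (monFun d))

/-- The quantization map `Q_{1/N}`: the linear extension of `Qmon` to all complex
polynomials in the three real variables `x, y, z`. -/
def Q (N : ℕ) (p : MvPolynomial (Fin 3) ℂ) : TP N :=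
  ∑ d ∈ p.support, p.coeff d • Qmon N d

/-- The symmetric subspace `Sym^N(ℂ²) ⊆ (ℂ²)^{⊗N}` (the fixed points of the permutation
action, i.e. the range of the vector symmetrizer). -/
def SymSub (N : ℕ) : Submodule ℂ (EuclideanSpace ℂ (Fin N → Fin 2)) where
  carrier := {v | ∀ σ : Equiv.Perm (Fin N), ∀ i, v (i ∘ σ) = v i}
  add_mem' := by
    intro a b ha hb σ i
    have : (a + b) (i ∘ σ) = a (i ∘ σ) + b (i ∘ σ) := rfl
    rw [this, ha σ i, hb σ i]; rfl
  zero_mem' := by intro σ i; rfl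
  smul_mem' := by
    intro c v hv σ i
    have : (c • v) (i ∘ σ) = c • (v (i ∘ σ)) := rfl
    rw [this, hv σ i]; rfl

/-- The vector symmetrizer. -/
def symVec (N : ℕ) (v : EuclideanSpace ℂ (Fin N → Fin 2)) :
    EuclideanSpace ℂ (Fin N → Fin 2) :=
  WithLp.toLp 2 (fun i => (N.factorial : ℂ)⁻¹ * ∑ σ : Equiv.Perm (Fin N), v (i ∘ σ))

lemma symVec_mem (N : ℕ) (v : EuclideanSpace ℂ (Fin N → Fin 2)) :
    symVec N v ∈ SymSub N := by
  intro τ i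
  show (N.factorial : ℂ)⁻¹ * ∑ σ : Equiv.Perm (Fin N), v ((i ∘ τ) ∘ σ)
      = (N.factorial : ℂ)⁻¹ * ∑ σ : Equiv.Perm (Fin N), v (i ∘ σ)
  congr 1
  exact Fintype.sum_equiv (Equiv.mulLeft τ) _ _ (fun σ => by rfl)

/-- The vector symmetrizer as a linear map onto the symmetric subspace. -/
def symProj (N : ℕ) : EuclideanSpace ℂ (Fin N → Fin 2) →ₗ[ℂ] SymSub N where
  toFun v := ⟨symVec N v, symVec_mem N v⟩
  map_add' v w := by
    apply Subtype.ext
    ext i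
    show (N.factorial : ℂ)⁻¹ * ∑ σ : Equiv.Perm (Fin N), (v + w) (i ∘ σ) = _
    have h : ∀ σ : Equiv.Perm (Fin N), (v + w) (i ∘ σ) = v (i ∘ σ) + w (i ∘ σ) :=
      fun _ => rfl
    simp only [h, Finset.sum_add_distrib]
    show _ = (N.factorial : ℂ)⁻¹ * (∑ σ : Equiv.Perm (Fin N), v (i ∘ σ))
        + (N.factorial : ℂ)⁻¹ * (∑ σ : Equiv.Perm (Fin N), w (i ∘ σ))
    ring
  map_smul' c v := by
    apply Subtype.ext
    ext i
    show (N.factorial : ℂ)⁻¹ * ∑ σ : Equiv.Perm (Fin N), (c • v) (i ∘ σ) = _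
    have h : ∀ σ : Equiv.Perm (Fin N), (c • v) (i ∘ σ) = c * v (i ∘ σ) := fun _ => rfl
    simp only [h, ← Finset.mul_sum]
    show _ = c * ((N.factorial : ℂ)⁻¹ * (∑ σ : Equiv.Perm (Fin N), v (i ∘ σ)))
    ring

/-- The restriction (compression) of a matrix `A` on `(ℂ²)^{⊗N}` to the symmetric subspace
`Sym^N(ℂ²)`, as a continuous linear operator; when `A` leaves `Sym^N(ℂ²)` invariant (as do
all operators considered here) this is exactly the restriction `A|_{Sym^N(ℂ²)}`. -/
def restrSym (N : ℕ) (A : TP N) : SymSub N →L[ℂ] SymSub N :=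
  LinearMap.toContinuousLinearMap
    ((symProj N) ∘ₗ (Matrix.toEuclideanLin A) ∘ₗ (SymSub N).subtype)

/-- The unit sphere `S² ⊂ ℝ³`. -/
abbrev S2 : Type := Metric.sphere (0 : EuclideanSpace ℝ (Fin 3)) 1

/-- Spherical coordinates `(θ, φ) ↦ (sin θ cos φ, sin θ sin φ, cos θ)`. -/
def sphCoord (a : ℝ × ℝ) : EuclideanSpace ℝ (Fin 3) :=
  WithLp.toLp 2 ![Real.sin a.1 * Real.cos a.2, Real.sin a.1 * Real.sin a.2, Real.cos a.1]

lemma sphCoord_mem (a : ℝ × ℝ) :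
    sphCoord a ∈ Metric.sphere (0 : EuclideanSpace ℝ (Fin 3)) 1 := by
  have h : ‖sphCoord a‖ = 1 := by
    rw [EuclideanSpace.norm_eq]
    have : ∑ i : Fin 3, sphCoord a i ^ 2 = 1 := by
      have hs := Real.sin_sq_add_cos_sq a.1
      have hc := Real.sin_sq_add_cos_sq a.2
      simp [sphCoord, Fin.sum_univ_three]
      nlinarith [hs, hc]
    have h2 : ∀ i : Fin 3, ‖sphCoord a i‖ ^ 2 = sphCoord a i ^ 2 := fun i => sq_abs _
    simp only [h2, this]
    exact Real.sqrt_one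
  simpa [mem_sphere_iff_norm] using h

/-- The standard surface measure `dΩ` on `S²` (of total mass `4π`), realized as the
push-forward of `sin θ dθ dφ` on `[0,π] × (−π,π]` under spherical coordinates. -/
def μS2 : Measure S2 :=
  Measure.map (fun a : ℝ × ℝ => (⟨sphCoord a, sphCoord_mem a⟩ : S2))
    (((volume : Measure (ℝ × ℝ)).restrict
        (Set.Icc (0 : ℝ) Real.pi ×ˢ Set.Ioc (-Real.pi) Real.pi)).withDensity
      fun a => ENNReal.ofReal (Real.sin a.1))

/-- The polar angle `θ ∈ [0, π]` of a point of `S²`. -/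
def thetaOf (Ω : S2) : ℝ := Real.arccos ((Ω : EuclideanSpace ℝ (Fin 3)) 2)

/-- The azimuthal angle `φ ∈ (−π, π]` of a point of `S²`. -/
def phiOf (Ω : S2) : ℝ :=
  Complex.arg (((Ω : EuclideanSpace ℝ (Fin 3)) 0 : ℂ) +
    ((Ω : EuclideanSpace ℝ (Fin 3)) 1 : ℂ) * Complex.I)

/-- The coherent spin state `|Ω⟩₁ = cos(θ/2) e₁ + e^{iφ} sin(θ/2) e₂ ∈ ℂ²`. -/
def cs1 (Ω : S2) : Fin 2 → ℂ :=
  ![(Real.cos (thetaOf Ω / 2) : ℂ),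
    Complex.exp (Complex.I * (phiOf Ω : ℂ)) * (Real.sin (thetaOf Ω / 2) : ℂ)]

/-- The `N`-fold coherent spin state `|Ω⟩_N = |Ω⟩₁^{⊗N} ∈ (ℂ²)^{⊗N}`. -/
def csN (N : ℕ) (Ω : S2) : EuclideanSpace ℂ (Fin N → Fin 2) :=
  WithLp.toLp 2 (fun i => ∏ k, cs1 Ω (i k))

/-- The matrix of the weak integral `((N+1)/(4π)) ∫_{S²} f(Ω) |Ω⟩⟨Ω|_N dΩ` on `(ℂ²)^{⊗N}`
(entrywise Bochner integral, which in finite dimension coincides with the weak integral). -/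
def Q'mat (N : ℕ) (f : S2 → ℂ) : TP N :=
  Matrix.of fun i j =>
    ((N + 1 : ℂ) / (4 * (Real.pi : ℂ))) * ∫ Ω, f Ω * csN N Ω i * conj (csN N Ω j) ∂μS2

/-- The coherent-state (Berezin) quantization map `Q'_{1/N}`, as an operator on
`Sym^N(ℂ²)` (the range of `|Ω⟩⟨Ω|_N` lies in `Sym^N(ℂ²)`, so the compression coincides
with the operator defined by the weak integral). -/
def Q' (N : ℕ) (f : S2 → ℂ) : SymSub N →L[ℂ] SymSub N := restrSym N (Q'mat N f)

/-- The restriction of a polynomial (in three real variables) to the unit sphere `S²`. -/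
def restrictS2 (p : MvPolynomial (Fin 3) ℂ) : S2 → ℂ :=
  fun Ω => MvPolynomial.eval (fun i => ((Ω : EuclideanSpace ℝ (Fin 3)) i : ℂ)) p

/-- The restriction to `S²` as a linear map. -/
def restrictS2Lin : MvPolynomial (Fin 3) ℂ →ₗ[ℂ] (S2 → ℂ) where
  toFun := restrictS2
  map_add' p q := by funext Ω; simp [restrictS2]
  map_smul' c p := by funext Ω; simp [restrictS2]

/-- `P_N(S²)`: the space of restrictions to `S²` of complex polynomials of degree `≤ N`
in three real variables. -/
def PNS2 (N : ℕ) : Submodule ℂ (S2 → ℂ) where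
  carrier := {g | ∃ p : MvPolynomial (Fin 3) ℂ, p.totalDegree ≤ N ∧ g = restrictS2 p}
  add_mem' := by
    rintro a b ⟨p, hp, rfl⟩ ⟨q, hq, rfl⟩
    exact ⟨p + q, le_trans (MvPolynomial.totalDegree_add p q) (by omega),
      by funext Ω; simp [restrictS2]⟩
  zero_mem' := ⟨0, by simp, by funext Ω; simp [restrictS2]⟩
  smul_mem' := by
    rintro c a ⟨p, hp, rfl⟩
    exact ⟨c • p, le_trans (MvPolynomial.totalDegree_smul_le c p) hp,
      by funext Ω; simp [restrictS2]⟩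

/-- The `N`-fold tensor power `U^{⊗N}` of a `2×2` matrix, on `(ℂ²)^{⊗N}`. -/
def tpow (N : ℕ) (U : Matrix (Fin 2) (Fin 2) ℂ) : TP N :=
  Matrix.of fun i j => ∏ k, U (i k) (j k)

/-- `σ_k(j) = I₂ ⊗ ⋯ ⊗ σ_k ⊗ ⋯ ⊗ I₂` with the Pauli matrix `σ_k` in the `j`-th slot. -/
def pauliAt (N : ℕ) (k : Fin 3) (j : Fin N) : TP N :=
  Matrix.of fun a b =>
    pauli k (a j) (b j) *
      ∏ t ∈ Finset.univ.filter (fun t : Fin N => t ≠ j), (if a t = b t then (1 : ℂ) else 0)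

/-- The quantum Curie–Weiss Hamiltonian
`h^{CW}_{1/N} = (1/N)( −(J/(2N)) Σ_{i,j} σ₃(i)σ₃(j) − B Σ_j σ₁(j))`. -/
def hCW (J B : ℝ) (N : ℕ) : TP N :=
  ((N : ℂ))⁻¹ • ((-(J / (2 * N)) : ℂ) • ∑ i : Fin N, ∑ j : Fin N,
      pauliAt N 2 i * pauliAt N 2 j
    + (-(B : ℂ)) • ∑ j : Fin N, pauliAt N 0 j)

open scoped Classical in
/-- The action of a (special orthogonal) matrix on the unit sphere `S²`
(junk value if the image does not lie on the sphere). -/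
def rotAct (R : Matrix (Fin 3) (Fin 3) ℝ) (Ω : S2) : S2 :=
  if h : (WithLp.toLp 2 (R.mulVec (Ω : EuclideanSpace ℝ (Fin 3))) : EuclideanSpace ℝ (Fin 3)) ∈
      Metric.sphere (0 : EuclideanSpace ℝ (Fin 3)) 1
  then ⟨WithLp.toLp 2 (R.mulVec (Ω : EuclideanSpace ℝ (Fin 3))), h⟩ else Ω

/-- A polynomial in three variables is harmonic if its Laplacian vanishes. -/
def IsHarmonic (p : MvPolynomial (Fin 3) ℂ) : Prop :=
  ∑ i : Fin 3, MvPolynomial.pderiv i (MvPolynomial.pderiv i p) = 0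

/-- The polynomial `x² + y² + z² − 1`. -/
def sphPoly : MvPolynomial (Fin 3) ℂ :=
  MvPolynomial.X 0 ^ 2 + MvPolynomial.X 1 ^ 2 + MvPolynomial.X 2 ^ 2 - 1

/-- The Dicke state `|k, N−k⟩ ∈ Sym^N(ℂ²)`: `binom(N,k)^{-1/2}` times the sum of all
elementary tensors with exactly `k` factors `e₂` (and `N−k` factors `e₁`). -/
def dicke (N k : ℕ) : EuclideanSpace ℂ (Fin N → Fin 2) :=
  WithLp.toLp 2 (fun i => if (Finset.univ.filter fun t => i t = 1).card = k
    then ((Real.sqrt (N.choose k) : ℂ))⁻¹ else 0)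

/-- The operator norm of a matrix acting on `(ℂ²)^{⊗N}` with its Euclidean (ℓ²) norm. -/
def matOpNorm {N : ℕ} (A : TP N) : ℝ :=
  ‖LinearMap.toContinuousLinearMap (Matrix.toEuclideanLin A)‖

/-! On a permutation-invariant vector `v`, the operator `σ₁⊗σ₁ + σ₂⊗σ₂ = 2(|e₁e₂⟩⟨e₂e₁| + h.c.)`
placed on the tensor slots `p ≠ q` acts diagonally in the product basis: it multiplies the
coefficient `v_i` by `2` if `i_p ≠ i_q` and by `0` otherwise. Symmetrizing averages this over the
slot pairs `(σ 0, σ 1)`, and since the permutation group is 2-transitive every ordered pair of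
distinct slots occurs equally often, namely `(N-2)!` times. For a basis vector `i` with `k` entries
equal to `e₂` there are `2k(N-k)` ordered pairs with `i_p ≠ i_q`, so the eigenvalue is
`2 · 2k(N-k) / (N(N-1))`. -/

open Finset

theorem card_offDiag_nsmul_sum_smul_pair {G α M : Type*} [Group G] [Fintype G]
    [MulAction G α] [Fintype α] [AddCommMonoid M] [MulAction.IsMultiplyPretransitive G α 2]
    (F : α → α → M) {a b : α} (hab : a ≠ b) :
    #(univ : Finset α).offDiag • ∑ g : G, F (g • a) (g • b) =
      Fintype.card G • ∑ x ∈ (univ : Finset α).offDiag, F x.1 x.2 := by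
  have hconst : ∀ x ∈ (univ : Finset α).offDiag,
      ∑ g : G, F (g • x.1) (g • x.2) = ∑ g : G, F (g • a) (g • b) := by
    intro x hx
    obtain ⟨τ, hτa, hτb⟩ := MulAction.is_two_pretransitive_iff.mp ‹_› hab (mem_offDiag.mp hx).2.2
    rw [← hτa, ← hτb]
    exact Fintype.sum_equiv (Equiv.mulRight τ) _ _ fun g => by simp [mul_smul]
  have hinv : ∀ g : G, ∑ x ∈ (univ : Finset α).offDiag, F (g • x.1) (g • x.2) =
      ∑ x ∈ (univ : Finset α).offDiag, F x.1 x.2 := fun g =>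
    sum_equiv ((MulAction.toPerm g).prodCongr (MulAction.toPerm g)) (by simp) (by simp)
  calc #(univ : Finset α).offDiag • ∑ g : G, F (g • a) (g • b)
      = ∑ x ∈ (univ : Finset α).offDiag, ∑ g : G, F (g • x.1) (g • x.2) := by
        rw [sum_congr rfl hconst, sum_const]
    _ = Fintype.card G • ∑ x ∈ (univ : Finset α).offDiag, F x.1 x.2 := by
        rw [sum_comm, sum_congr rfl fun g _ => hinv g, sum_const, card_univ]

theorem card_filter_apply_ne_apply {α : Type*} [Fintype α] [DecidableEq α] (i : α → Fin 2) :
    #{x : α × α | i x.1 ≠ i x.2} = 2 * #{t | i t = 1} * #{t | i t = 0} := by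
  have hpairs : (univ.filter fun x : α × α => i x.1 ≠ i x.2) =
      (univ.filter (i · = 1)) ×ˢ (univ.filter (i · = 0)) ∪
        (univ.filter (i · = 0)) ×ˢ (univ.filter (i · = 1)) := by
    ext ⟨p, q⟩
    simp only [mem_filter, mem_univ, true_and, mem_union, mem_product]
    omega
  rw [hpairs, card_union_of_disjoint, card_product, card_product]
  · ring
  · rw [disjoint_product]; left; exact disjoint_filter.mpr fun t _ h => by simp [h]

theorem dicke_mem_SymSub (N k : ℕ) : dicke N k ∈ SymSub N := by
  intro σ i
  have hcard : #{t | (i ∘ σ) t = 1} = #{t | i t = 1} :=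
    card_bij (fun t _ => σ t) (by simp) (fun _ _ _ _ h => σ.injective h)
      fun t ht => ⟨σ⁻¹ t, by simpa using ht, by simp⟩
  simp only [dicke, hcard]

theorem symmMat_mulVec_of_mem_SymSub {N : ℕ} (A : TP N) {v : EuclideanSpace ℂ (Fin N → Fin 2)}
    (hv : v ∈ SymSub N) (i : Fin N → Fin 2) :
    (symmMat N A).mulVec v i =
      (N.factorial : ℂ)⁻¹ * ∑ σ : Equiv.Perm (Fin N), A.mulVec v (i ∘ σ) := by
  have hreindex : ∀ σ : Equiv.Perm (Fin N),
      ∑ j, A (i ∘ σ) (j ∘ σ) * v j = A.mulVec v (i ∘ σ) := fun σ =>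
    calc ∑ j, A (i ∘ σ) (j ∘ σ) * v j = ∑ j, A (i ∘ σ) (j ∘ σ) * v (j ∘ σ) := by
          simp only [hv σ]
      _ = A.mulVec v (i ∘ σ) :=
          Equiv.sum_comp (σ.symm.arrowCongr (Equiv.refl _)) fun j => A (i ∘ σ) j * v j
  calc (symmMat N A).mulVec v i
      = ∑ j, ((N.factorial : ℂ)⁻¹ * ∑ σ : Equiv.Perm (Fin N), A (i ∘ σ) (j ∘ σ)) * v j := by
        simp [symmMat, Matrix.mulVec, dotProduct, Matrix.sum_apply]
    _ = (N.factorial : ℂ)⁻¹ * ∑ σ : Equiv.Perm (Fin N), ∑ j, A (i ∘ σ) (j ∘ σ) * v j := by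
        simp only [sum_mul, mul_sum, mul_assoc]
        exact sum_comm
    _ = _ := by simp only [hreindex]

def xyCoupling : TP 2 :=
  pauliTensor (fun _ : Fin 2 => (0 : Fin 3)) + pauliTensor (fun _ : Fin 2 => (1 : Fin 3))

theorem xyCoupling_apply (u v : Fin 2 → Fin 2) :
    xyCoupling u v = if u 0 ≠ u 1 ∧ v 0 = u 1 ∧ v 1 = u 0 then 2 else 0 := by
  simp only [xyCoupling, Matrix.add_apply, pauliTensor, Matrix.of_apply, Fin.prod_univ_two]
  generalize u 0 = a, u 1 = b, v 0 = c, v 1 = d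
  fin_cases a <;> fin_cases b <;> fin_cases c <;> fin_cases d <;> simp [pauli, one_add_one_eq_two]

theorem embedMat_xyCoupling_apply {N : ℕ} (hN : 2 ≤ N) (w j : Fin N → Fin 2) :
    embedMat 2 N xyCoupling w j =
      if w (Fin.castLE hN 0) ≠ w (Fin.castLE hN 1) ∧
          j = w ∘ Equiv.swap (Fin.castLE hN 0) (Fin.castLE hN 1) then 2 else 0 := by
  rw [embedMat, dif_pos hN, Matrix.of_apply, xyCoupling_apply, prod_boole, ite_zero_mul_ite_zero,
    mul_one]
  set e₀ : Fin N := Fin.castLE hN 0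
  set e₁ : Fin N := Fin.castLE hN 1
  have houtside : ∀ t : Fin N, 2 ≤ (t : ℕ) ↔ t ≠ e₀ ∧ t ≠ e₁ := fun t => by
    simp only [e₀, e₁, ne_eq, Fin.ext_iff, Fin.val_castLE]
    omega
  have hswap : (j e₀ = w e₁ ∧ j e₁ = w e₀ ∧ ∀ t ∈ univ.filter fun t : Fin N => 2 ≤ (t : ℕ),
      w t = j t) ↔ j = w ∘ Equiv.swap e₀ e₁ := by
    simp only [mem_filter, mem_univ, true_and, houtside, funext_iff, Function.comp_apply]
    constructor
    · rintro ⟨h₀, h₁, hrest⟩ t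
      by_cases ht₀ : t = e₀
      · simp [ht₀, h₀]
      by_cases ht₁ : t = e₁
      · simp [ht₁, h₁]
      rw [Equiv.swap_apply_of_ne_of_ne ht₀ ht₁, hrest t ⟨ht₀, ht₁⟩]
    · intro h
      refine ⟨by simp [h], by simp [h], fun t ht => ?_⟩
      rw [h, Equiv.swap_apply_of_ne_of_ne ht.1 ht.2]
  simp only [and_assoc, hswap]

theorem embedMat_xyCoupling_mulVec_of_mem_SymSub {N : ℕ} (hN : 2 ≤ N)
    {v : EuclideanSpace ℂ (Fin N → Fin 2)} (hv : v ∈ SymSub N) (w : Fin N → Fin 2) :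
    (embedMat 2 N xyCoupling).mulVec v w =
      if w (Fin.castLE hN 0) ≠ w (Fin.castLE hN 1) then 2 * v w else 0 := by
  simp only [Matrix.mulVec, dotProduct, embedMat_xyCoupling_apply hN, ite_and, ite_mul, zero_mul]
  split_ifs
  · simp [hv _ w]
  · simp

theorem card_offDiag_mul_card_filter_perm_ne {α : Type*} [Fintype α] [DecidableEq α]
    (i : α → Fin 2) {a b : α} (hab : a ≠ b) :
    #(univ : Finset α).offDiag * #{σ : Equiv.Perm α | i (σ a) ≠ i (σ b)} =
      (Fintype.card α).factorial * (2 * #{t | i t = 1} * #{t | i t = 0}) := by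
  have := Equiv.Perm.isMultiplyPretransitive α 2
  have havg := card_offDiag_nsmul_sum_smul_pair (G := Equiv.Perm α)
    (fun p q => if i p ≠ i q then 1 else 0) hab
  have hoff : (univ : Finset α).offDiag.filter (fun x => i x.1 ≠ i x.2) =
      univ.filter fun x : α × α => i x.1 ≠ i x.2 := by
    ext x
    simp only [mem_filter, mem_offDiag, mem_univ, true_and, and_iff_right_iff_imp]
    exact fun h hx => h (congrArg i hx)
  simp only [smul_eq_mul, Equiv.Perm.smul_def, sum_boole, Nat.cast_id,
    hoff, Fintype.card_perm] at havg
  rw [havg, card_filter_apply_ne_apply]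

theorem cast_card_offDiag_mul_card_filter_perm_ne {N k : ℕ} (i : Fin N → Fin 2)
    (hi : #{t | i t = 1} = k) {a b : Fin N} (hab : a ≠ b) :
    ((N : ℂ) * N - N) * #{σ : Equiv.Perm (Fin N) | i (σ a) ≠ i (σ b)} =
      N.factorial * (2 * k * (N - k)) := by
  have h0 : (#{t | i t = 0} : ℂ) = N - k := by
    have hsplit := card_filter_add_card_filter_not (s := univ) (fun t => i t = 1)
    have hnot : ∀ t, ¬i t = 1 ↔ i t = 0 := fun t => by omega
    simp only [hnot, card_univ, Fintype.card_fin, hi] at hsplit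
    rw [eq_sub_iff_add_eq']
    exact_mod_cast hsplit
  have hcount := congrArg (Nat.cast (R := ℂ)) (card_offDiag_mul_card_filter_perm_ne i hab)
  rw [offDiag_card, card_univ, Fintype.card_fin] at hcount
  push_cast [Nat.cast_sub (Nat.le_mul_self N), hi, h0] at hcount
  exact hcount

theorem dicke_eigenvector_SMN_sigma1_sigma2_general (N k : ℕ) (hN : 2 ≤ N) :
    (SMN 2 N (pauliTensor (fun _ : Fin 2 => (0 : Fin 3)) +
        pauliTensor (fun _ : Fin 2 => (1 : Fin 3)))).mulVec (dicke N k) =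
      (((4 * k * ((N : ℝ) - k)) / (N * ((N : ℝ) - 1)) : ℝ) : ℂ) • dicke N k := by
  have hv := dicke_mem_SymSub N k
  have hslots : Fin.castLE hN 0 ≠ Fin.castLE hN 1 := by simp [Fin.ext_iff]
  funext i
  change (SMN 2 N xyCoupling).mulVec _ i = _
  rw [SMN, symmMat_mulVec_of_mem_SymSub _ hv]
  simp only [embedMat_xyCoupling_mulVec_of_mem_SymSub hN hv, hv _ i, Function.comp_apply,
    ← sum_filter, sum_const, nsmul_eq_mul, Pi.smul_apply, smul_eq_mul]
  by_cases hi : #{t | i t = 1} = k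
  · have hX := cast_card_offDiag_mul_card_filter_perm_ne i hi hslots
    have hN0 : (N : ℂ) ≠ 0 := by exact_mod_cast (by omega : N ≠ 0)
    have hN1 : (N : ℂ) - 1 ≠ 0 := by
      rw [sub_ne_zero]
      exact_mod_cast (by omega : N ≠ 1)
    have hfac : (N.factorial : ℂ) ≠ 0 := by exact_mod_cast N.factorial_ne_zero
    push_cast
    field_simp
    linear_combination (2 * dicke N k i) * hX
  · simp [dicke, hi]

/-- for `N ≥ 2` and `0 ≤ k ≤ N`, the Dicke vector `|k, N−k⟩` is an
eigenvector of `S_{2,N}(σ₁⊗σ₁ + σ₂⊗σ₂)` with eigenvalue `4k(N−k)/(N(N−1))`. -/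
theorem dicke_eigenvector_SMN_sigma1_sigma2 (N k : ℕ) (hN : 2 ≤ N) (hk : k ≤ N) :
    (SMN 2 N (pauliTensor (fun _ : Fin 2 => (0 : Fin 3)) +
        pauliTensor (fun _ : Fin 2 => (1 : Fin 3)))).mulVec (dicke N k) =
      (((4 * k * ((N : ℝ) - k)) / (N * ((N : ℝ) - 1)) : ℝ) : ℂ) • dicke N k :=
  dicke_eigenvector_SMN_sigma1_sigma2_general N k hN

end
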